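/- arXiv:2010.13169 — 5 statements merged into one kernel-verified Lean document; each statement's English description precedes it below -/
import Mathlib

section
/- For every n ∈ ℕ and x ∈ V, the class B n x is not a compact subset of the topological space (V, τ). (Abstract form of Lemma 4.21 of the paper.) -/
/-- Abstract form of Lemma 4.21: if every class splits infinitely (each `B n x`
contains an infinite set of pairwise non-`E (n+1)`-equivalent points), then no
class `B n x` is compact in `(V, τ)`. -/
theorem class_not_compact (V : Type*) (E : ℕ → V → V → Prop)
    (hEquiv : ∀ n, Equivalence (E n))
    (hRefine : ∀ n x y, E (n + 1) x y → E n x y)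
    (hSplit : ∀ (n : ℕ) (x : V), ∃ T : Set V, T ⊆ {y | E n x y} ∧ T.Infinite ∧
      T.Pairwise fun a b => ¬ E (n + 1) a b) :
    letI : TopologicalSpace V :=
      TopologicalSpace.generateFrom {s : Set V | ∃ n x, s = {y | E n x y}}
    ∀ (n : ℕ) (x : V), ¬ IsCompact {y | E n x y} := by
  letI ts : TopologicalSpace V :=
    TopologicalSpace.generateFrom {s : Set V | ∃ n x, s = {y | E n x y}}
  intro n x hcomp
  obtain ⟨T, hTsub, hTinf, hTpair⟩ := hSplit n x
  -- cover by E (n+1)-classes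
  have hopen : ∀ y : V, IsOpen {z | E (n + 1) y z} :=
    fun y => TopologicalSpace.GenerateOpen.basic _ ⟨n + 1, y, rfl⟩
  have hcover : {y | E n x y} ⊆ ⋃ y : V, {z | E (n + 1) y z} := by
    intro z _
    exact Set.mem_iUnion.2 ⟨z, (hEquiv (n + 1)).refl z⟩
  obtain ⟨t, ht⟩ := hcomp.elim_finite_subcover _ hopen hcover
  -- T is finite: it's a union over t of subsingletons
  have hTfin : T.Finite := by
    have : T ⊆ ⋃ y ∈ t, (T ∩ {z | E (n + 1) y z}) := by
      intro a ha
      obtain ⟨y, hy, hay⟩ := Set.mem_iUnion₂.1 (ht (hTsub ha))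
      exact Set.mem_iUnion₂.2 ⟨y, hy, ha, hay⟩
    refine Set.Finite.subset (Set.Finite.biUnion t.finite_toSet ?_) this
    intro y _
    refine Set.Subsingleton.finite ?_
    intro a ⟨haT, haE⟩ b ⟨hbT, hbE⟩
    by_contra hne
    exact hTpair haT hbT hne
      ((hEquiv (n + 1)).trans ((hEquiv (n + 1)).symm haE) hbE)
  exact hTinf hTfin
end

section
/- Every compact subset of the topological space (V, τ) has empty interior. (Abstract form of Lemma 4.22 of the paper.) -/
/-- Abstract form of Lemma 4.22: if every class splits infinitely, then every
compact subset of `(V, τ)` has empty interior. -/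
theorem compact_empty_interior (V : Type*) (E : ℕ → V → V → Prop)
    (hEquiv : ∀ n, Equivalence (E n))
    (hRefine : ∀ n x y, E (n + 1) x y → E n x y)
    (hSplit : ∀ (n : ℕ) (x : V), ∃ T : Set V, T ⊆ {y | E n x y} ∧ T.Infinite ∧
      T.Pairwise fun a b => ¬ E (n + 1) a b) :
    letI : TopologicalSpace V :=
      TopologicalSpace.generateFrom {s : Set V | ∃ n x, s = {y | E n x y}}
    ∀ K : Set V, IsCompact K → interior K = ∅ := by
  letI tV : TopologicalSpace V :=
    TopologicalSpace.generateFrom {s : Set V | ∃ n x, s = {y | E n x y}}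
  intro K hK
  -- monotonicity of the relations
  have hMono : ∀ m n : ℕ, m ≤ n → ∀ x y, E n x y → E m x y := by
    intro m n hmn
    induction n with
    | zero => intro x y h; obtain rfl : m = 0 := Nat.le_zero.mp hmn; exact h
    | succ n ih =>
      intro x y h
      rcases Nat.le_succ_iff.mp hmn with h' | rfl
      · exact ih h' x y (hRefine n x y h)
      · exact h
  set B : Set (Set V) := {s : Set V | ∃ n x, s = {y | E n x y}} with hBdef
  have hBasis : TopologicalSpace.IsTopologicalBasis B := by
    refine ⟨?_, ?_, rfl⟩
    · rintro t₁ ⟨n, a, rfl⟩ t₂ ⟨m, b, rfl⟩ x ⟨hx1, hx2⟩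
      refine ⟨{y | E (max n m) x y}, ⟨max n m, x, rfl⟩, (hEquiv _).refl x, ?_⟩
      intro y hy
      exact ⟨(hEquiv n).trans hx1 (hMono n _ (le_max_left n m) x y hy),
        (hEquiv m).trans hx2 (hMono m _ (le_max_right n m) x y hy)⟩
    · ext x
      simp only [Set.mem_sUnion, Set.mem_univ, iff_true]
      exact ⟨{y | E 0 x y}, ⟨0, x, rfl⟩, (hEquiv 0).refl x⟩
  by_contra hne
  obtain ⟨x, hx⟩ := Set.nonempty_iff_ne_empty.mpr hne
  obtain ⟨t, ⟨n, a, rfl⟩, hxt, hts⟩ := hBasis.isOpen_iff.mp isOpen_interior x hx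
  obtain ⟨T, hTsub, hTinf, hTpw⟩ := hSplit n a
  have hTK : T ⊆ K := fun y hy => interior_subset (hts (hTsub hy))
  -- cover K by (n+1)-classes
  have hcover : K ⊆ ⋃ y : V, {z | E (n + 1) y z} :=
    fun y _ => Set.mem_iUnion.mpr ⟨y, (hEquiv (n + 1)).refl y⟩
  have hopen : ∀ y : V, IsOpen {z | E (n + 1) y z} :=
    fun y => TopologicalSpace.GenerateOpen.basic _ ⟨n + 1, y, rfl⟩
  obtain ⟨s, hs⟩ := hK.elim_finite_subcover _ hopen hcover
  -- each element of T lies in some class from s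
  have hchoice : ∀ t ∈ T, ∃ y ∈ s, E (n + 1) y t := by
    intro t ht
    have := hs (hTK ht)
    simpa using this
  choose f hf1 hf2 using hchoice
  classical
  set g : V → V := fun t => if h : t ∈ T then f t h else x with hg
  have hmaps : Set.MapsTo g T (↑s : Set V) := by
    intro t ht; simp only [hg, dif_pos ht]; exact hf1 t ht
  obtain ⟨u, hu, v, hv, huv, hguv⟩ :=
    hTinf.exists_ne_map_eq_of_mapsTo hmaps s.finite_toSet
  have hEuv : E (n + 1) u v := by
    have h1 : E (n + 1) (g u) u := by simpa [hg, dif_pos hu] using hf2 u hu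
    have h2 : E (n + 1) (g v) v := by simpa [hg, dif_pos hv] using hf2 v hv
    rw [hguv] at h1
    exact (hEquiv (n + 1)).trans ((hEquiv (n + 1)).symm h1) h2
  exact hTpw hu hv huv hEuv
end

section
/- The function d is a metric on V — d(x,y) = 0 if and only if x = y, d(x,y) = d(y,x) for all x, y, and d(x,z) ≤ d(x,y) + d(y,z) for all x, y, z — and moreover d(x,y) = d̂(x,y) whenever x and y are related. (Abstract form of Theorem 5.5, parts (1) and the metric axioms, of the paper.) -/
/-- `x` and `y` are related: equal, `E 0`-equivalent, or joined by an elementary move. -/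
def Related {V : Type*} (E : ℕ → V → V → Prop) (A : V → V → Prop) (x y : V) : Prop :=
  x = y ∨ E 0 x y ∨ A x y

open Classical in
/-- The partial distance `d̂` (given a total value on unrelated pairs, which is
never used): `d̂(x,y) = 0` if `x = y`; if `x ≠ y` and `E 0 x y`, then
`d̂(x,y) = 1/n` where `n` is the least (equivalently, for a separating refining
family, the unique) integer with `¬ E n x y` — so `E (n-1) x y` and `¬ E n x y`;
and `d̂(x,y) = 1` if `¬ E 0 x y`. -/
noncomputable def dhat {V : Type*} (E : ℕ → V → V → Prop) (x y : V) : ℝ :=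
  if x = y then 0
  else if E 0 x y then ((sInf {n : ℕ | ¬ E n x y} : ℕ) : ℝ)⁻¹
  else 1

/-- `c` is a chain of length-parameter `ℓ` from `x` to `y`: consecutive terms are related. -/
def IsChain' {V : Type*} (E : ℕ → V → V → Prop) (A : V → V → Prop)
    (x y : V) (ℓ : ℕ) (c : ℕ → V) : Prop :=
  c 0 = x ∧ c ℓ = y ∧ ∀ i < ℓ, Related E A (c i) (c (i + 1))

/-- The length of a chain: the sum of `d̂` over consecutive pairs. -/
noncomputable def chainLength {V : Type*} (E : ℕ → V → V → Prop)
    (ℓ : ℕ) (c : ℕ → V) : ℝ :=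
  ∑ i ∈ Finset.range ℓ, dhat E (c i) (c (i + 1))

/-- The distance `d(x,y)`: the infimum of the lengths of all chains from `x` to `y`. -/
noncomputable def pdist {V : Type*} (E : ℕ → V → V → Prop) (A : V → V → Prop)
    (x y : V) : ℝ :=
  sInf {L : ℝ | ∃ ℓ c, IsChain' E A x y ℓ c ∧ L = chainLength E ℓ c}

/-!
On an `E 0`-class, `d̂(x,y) = 1/n` with `n` the first level separating `x` and `y`. Below both
separation levels of `(x,y)` and `(y,z)`, transitivity keeps `x` and `z` together, so `d̂` is an
ultrametric on each class; as `d̂ ≤ 1` everywhere, it satisfies the triangle inequality on all of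
`V`. Hence every chain from `x` to `y` has length at least `d̂(x,y)`, with equality for the one-step
chain between related points: `d = d̂` on related pairs, and `d(x,y) ≥ d̂(x,y) > 0` for `x ≠ y` by
separation. Symmetry and the triangle inequality for `d` come from reversing and concatenating
chains.
-/

section Dhat

variable {V : Type*} {E : ℕ → V → V → Prop}

/-- `0` if `x` and `y` are never separated, since `sInf ∅ = 0`. -/
noncomputable def sepLevel (E : ℕ → V → V → Prop) (x y : V) : ℕ := sInf {n : ℕ | ¬ E n x y}

theorem sepLevel_pos {x y : V} (h0 : E 0 x y) (hsep : ∃ n, ¬ E n x y) : 0 < sepLevel E x y :=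
  Nat.pos_of_ne_zero fun h =>
    (Nat.sInf_eq_zero.1 h).elim (· h0) (Set.nonempty_iff_ne_empty.1 hsep)

theorem min_sepLevel_le (hE : ∀ n, Equivalence (E n)) {x y z : V} (hsep : ∃ n, ¬ E n x z) :
    min (sepLevel E x y) (sepLevel E y z) ≤ sepLevel E x z := by
  refine le_csInf hsep fun n hn => ?_
  by_contra! hlt
  have hxy : E n x y := not_not.1 (Nat.notMem_of_lt_sInf (lt_of_lt_of_le hlt (min_le_left _ _)))
  have hyz : E n y z := not_not.1 (Nat.notMem_of_lt_sInf (lt_of_lt_of_le hlt (min_le_right _ _)))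
  exact hn ((hE n).trans hxy hyz)

theorem dhat_self (x : V) : dhat E x x = 0 := by simp [dhat]

theorem dhat_nonneg (x y : V) : 0 ≤ dhat E x y := by
  unfold dhat; split_ifs <;> positivity

theorem dhat_le_one (x y : V) : dhat E x y ≤ 1 := by
  unfold dhat; split_ifs
  exacts [zero_le_one, Nat.cast_inv_le_one _, le_rfl]

/-- For `x = y` this holds because `sInf ∅ = 0` and `0⁻¹ = 0` in `ℝ`. -/
theorem dhat_of_E0 (hE : ∀ n, Equivalence (E n)) {x y : V} (h0 : E 0 x y) :
    dhat E x y = (sepLevel E x y : ℝ)⁻¹ := by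
  by_cases hxy : x = y
  · subst hxy
    simp [dhat, sepLevel, (hE _).refl]
  · simp [dhat, sepLevel, hxy, h0]

theorem dhat_of_not_E0 (hE : ∀ n, Equivalence (E n)) {x y : V} (h0 : ¬ E 0 x y) :
    dhat E x y = 1 := by
  have hxy : x ≠ y := by rintro rfl; exact h0 ((hE 0).refl x)
  simp [dhat, hxy, h0]

theorem dhat_comm (hE : ∀ n, Equivalence (E n)) (x y : V) : dhat E x y = dhat E y x := by
  by_cases hxy : x = y
  · subst hxy; rfl
  have hswap : ∀ n, E n x y ↔ E n y x := fun n => ⟨(hE n).symm, (hE n).symm⟩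
  by_cases h0 : E 0 x y
  · simp [dhat, hxy, Ne.symm hxy, h0, (hswap 0).1 h0, hswap]
  · simp [dhat, hxy, Ne.symm hxy, h0, mt (hswap 0).2 h0]

theorem dhat_pos (hSep : ∀ x y : V, x ≠ y → ∃ n, ¬ E n x y) {x y : V} (hxy : x ≠ y) :
    0 < dhat E x y := by
  rw [dhat, if_neg hxy]
  split_ifs with h0
  · exact inv_pos.2 (Nat.cast_pos (α := ℝ) |>.2 (sepLevel_pos h0 (hSep x y hxy)))
  · exact one_pos

theorem dhat_le_max (hE : ∀ n, Equivalence (E n)) (hSep : ∀ x y : V, x ≠ y → ∃ n, ¬ E n x y)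
    (x y z : V) : dhat E x z ≤ max (dhat E x y) (dhat E y z) := by
  by_cases hxy : x = y
  · subst hxy; simp [dhat_self, dhat_nonneg]
  by_cases hyz : y = z
  · subst hyz; simp [dhat_self, dhat_nonneg]
  by_cases h1 : E 0 x y
  swap
  · rw [dhat_of_not_E0 hE h1]; exact le_max_of_le_left (dhat_le_one x z)
  by_cases h2 : E 0 y z
  swap
  · rw [dhat_of_not_E0 hE h2]; exact le_max_of_le_right (dhat_le_one x z)
  by_cases hxz : x = z
  · subst hxz; simp [dhat_self, dhat_nonneg]
  have hmin := min_sepLevel_le hE (y := y) (hSep x z hxz)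
  rw [dhat_of_E0 hE h1, dhat_of_E0 hE h2, dhat_of_E0 hE ((hE 0).trans h1 h2)]
  have hinv {m : ℕ} (hm : 0 < m) (hle : m ≤ sepLevel E x z) :
      (sepLevel E x z : ℝ)⁻¹ ≤ (m : ℝ)⁻¹ :=
    inv_anti₀ (Nat.cast_pos.2 hm) (Nat.cast_le.2 hle)
  rcases min_choice (sepLevel E x y) (sepLevel E y z) with h | h <;> rw [h] at hmin
  · exact le_max_of_le_left (hinv (sepLevel_pos h1 (hSep x y hxy)) hmin)
  · exact le_max_of_le_right (hinv (sepLevel_pos h2 (hSep y z hyz)) hmin)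

theorem dhat_triangle (hE : ∀ n, Equivalence (E n)) (hSep : ∀ x y : V, x ≠ y → ∃ n, ¬ E n x y)
    (x y z : V) : dhat E x z ≤ dhat E x y + dhat E y z :=
  (dhat_le_max hE hSep x y z).trans (max_le_add_of_nonneg (dhat_nonneg x y) (dhat_nonneg y z))

end Dhat

theorem Related.symm {V : Type*} {E : ℕ → V → V → Prop} {A : V → V → Prop}
    (hE : ∀ n, Equivalence (E n)) (hA : ∀ x y : V, A x y → A y x) {x y : V} :
    Related E A x y → Related E A y x
  | .inl h => .inl h.symm
  | .inr (.inl h) => .inr (.inl ((hE 0).symm h))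
  | .inr (.inr h) => .inr (.inr (hA x y h))

namespace IsChain'

variable {V : Type*} {E : ℕ → V → V → Prop} {A : V → V → Prop}

theorem single {x y : V} (h : Related E A x y) :
    IsChain' E A x y 1 (fun i => if i = 0 then x else y) :=
  ⟨rfl, rfl, fun i hi => by
    obtain rfl : i = 0 := by omega
    simpa using h⟩

theorem chainLength_single (x y : V) :
    chainLength E 1 (fun i => if i = 0 then x else y) = dhat E x y := by
  simp [chainLength]

theorem reverse (hE : ∀ n, Equivalence (E n)) (hA : ∀ x y : V, A x y → A y x)
    {x y : V} {ℓ : ℕ} {c : ℕ → V} (h : IsChain' E A x y ℓ c) :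
    IsChain' E A y x ℓ (fun i => c (ℓ - i)) := by
  obtain ⟨h0, hℓ, hrel⟩ := h
  refine ⟨by simpa using hℓ, by simpa using h0, fun i hi => ?_⟩
  have hi' : ℓ - i = ℓ - (i + 1) + 1 := by omega
  simp only [hi']
  exact (hrel _ (by omega)).symm hE hA

theorem chainLength_reverse (hE : ∀ n, Equivalence (E n)) (ℓ : ℕ) (c : ℕ → V) :
    chainLength E ℓ (fun i => c (ℓ - i)) = chainLength E ℓ c := by
  rw [chainLength, ← Finset.sum_range_reflect]
  refine Finset.sum_congr rfl fun i hi => ?_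
  have hi := Finset.mem_range.1 hi
  rw [show ℓ - (ℓ - 1 - i) = i + 1 by omega, show ℓ - (ℓ - 1 - i + 1) = i by omega, dhat_comm hE]

def appendFun (ℓ₁ : ℕ) (c₁ c₂ : ℕ → V) (i : ℕ) : V := if i ≤ ℓ₁ then c₁ i else c₂ (i - ℓ₁)

theorem appendFun_of_le {ℓ₁ i : ℕ} (c₁ c₂ : ℕ → V) (hi : i ≤ ℓ₁) :
    appendFun ℓ₁ c₁ c₂ i = c₁ i := if_pos hi

theorem appendFun_add {ℓ₁ : ℕ} {c₁ c₂ : ℕ → V} (hc : c₁ ℓ₁ = c₂ 0) (j : ℕ) :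
    appendFun ℓ₁ c₁ c₂ (ℓ₁ + j) = c₂ j := by
  rcases Nat.eq_zero_or_pos j with rfl | hj
  · simpa [appendFun] using hc
  · simp [appendFun, show ¬ ℓ₁ + j ≤ ℓ₁ by omega]

theorem append {x y z : V} {ℓ₁ ℓ₂ : ℕ} {c₁ c₂ : ℕ → V}
    (h₁ : IsChain' E A x y ℓ₁ c₁) (h₂ : IsChain' E A y z ℓ₂ c₂) :
    IsChain' E A x z (ℓ₁ + ℓ₂) (appendFun ℓ₁ c₁ c₂) := by
  have hc : c₁ ℓ₁ = c₂ 0 := h₁.2.1.trans h₂.1.symm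
  refine ⟨(appendFun_of_le c₁ c₂ (Nat.zero_le _)).trans h₁.1,
    (appendFun_add hc ℓ₂).trans h₂.2.1, fun i hi => ?_⟩
  rcases lt_or_ge i ℓ₁ with hlt | hge
  · rw [appendFun_of_le c₁ c₂ hlt.le, appendFun_of_le c₁ c₂ hlt]
    exact h₁.2.2 i hlt
  · obtain ⟨j, rfl⟩ := Nat.exists_eq_add_of_le hge
    rw [appendFun_add hc, add_assoc, appendFun_add hc]
    exact h₂.2.2 j (by omega)

theorem chainLength_append {ℓ₁ : ℕ} (ℓ₂ : ℕ) {c₁ c₂ : ℕ → V} (hc : c₁ ℓ₁ = c₂ 0) :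
    chainLength E (ℓ₁ + ℓ₂) (appendFun ℓ₁ c₁ c₂) = chainLength E ℓ₁ c₁ + chainLength E ℓ₂ c₂ := by
  rw [chainLength, Finset.sum_range_add]
  congr 1
  · refine Finset.sum_congr rfl fun i hi => ?_
    have hi := Finset.mem_range.1 hi
    rw [appendFun_of_le c₁ c₂ hi.le, appendFun_of_le c₁ c₂ hi]
  · refine Finset.sum_congr rfl fun j _ => ?_
    rw [appendFun_add hc, add_assoc, appendFun_add hc]

theorem dhat_le_chainLength (hE : ∀ n, Equivalence (E n))
    (hSep : ∀ x y : V, x ≠ y → ∃ n, ¬ E n x y) {x y : V} {ℓ : ℕ} {c : ℕ → V}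
    (h : IsChain' E A x y ℓ c) : dhat E x y ≤ chainLength E ℓ c := by
  obtain ⟨h0, hℓ, hrel⟩ := h
  subst h0 hℓ
  induction ℓ with
  | zero => simp [dhat_self, chainLength]
  | succ ℓ ih =>
    rw [chainLength, Finset.sum_range_succ]
    exact (dhat_triangle hE hSep _ (c ℓ) _).trans
      (add_le_add (ih fun i hi => hrel i (by omega)) le_rfl)

end IsChain'

section Pdist

variable {V : Type*} {E : ℕ → V → V → Prop} {A : V → V → Prop}

def chainLengths (E : ℕ → V → V → Prop) (A : V → V → Prop) (x y : V) : Set ℝ :=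
  {L : ℝ | ∃ ℓ c, IsChain' E A x y ℓ c ∧ L = chainLength E ℓ c}

theorem pdist_eq_sInf (x y : V) : pdist E A x y = sInf (chainLengths E A x y) := rfl

theorem chainLengths_bddBelow (x y : V) : BddBelow (chainLengths E A x y) :=
  ⟨0, by rintro _ ⟨ℓ, c, -, rfl⟩; exact Finset.sum_nonneg fun i _ => dhat_nonneg _ _⟩

theorem chainLengths_nonempty (hChain : ∀ x y : V, ∃ z, E 0 x z ∧ ∃ ℓ c, IsChain' E A z y ℓ c)
    (x y : V) : (chainLengths E A x y).Nonempty := by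
  obtain ⟨z, hxz, ℓ, c, hc⟩ := hChain x y
  exact ⟨_, _, _, (IsChain'.single (.inr (.inl hxz))).append hc, rfl⟩

theorem pdist_le_chainLength {x y : V} {ℓ : ℕ} {c : ℕ → V} (h : IsChain' E A x y ℓ c) :
    pdist E A x y ≤ chainLength E ℓ c :=
  csInf_le (chainLengths_bddBelow x y) ⟨ℓ, c, h, rfl⟩

theorem le_pdist (hChain : ∀ x y : V, ∃ z, E 0 x z ∧ ∃ ℓ c, IsChain' E A z y ℓ c)
    {x y : V} {a : ℝ} (h : ∀ ℓ c, IsChain' E A x y ℓ c → a ≤ chainLength E ℓ c) :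
    a ≤ pdist E A x y :=
  le_csInf (chainLengths_nonempty hChain x y) (by rintro _ ⟨ℓ, c, hc, rfl⟩; exact h ℓ c hc)

theorem dhat_le_pdist (hE : ∀ n, Equivalence (E n)) (hSep : ∀ x y : V, x ≠ y → ∃ n, ¬ E n x y)
    (hChain : ∀ x y : V, ∃ z, E 0 x z ∧ ∃ ℓ c, IsChain' E A z y ℓ c) (x y : V) :
    dhat E x y ≤ pdist E A x y :=
  le_pdist hChain fun _ _ hc => hc.dhat_le_chainLength hE hSep

theorem pdist_eq_dhat (hE : ∀ n, Equivalence (E n)) (hSep : ∀ x y : V, x ≠ y → ∃ n, ¬ E n x y)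
    (hChain : ∀ x y : V, ∃ z, E 0 x z ∧ ∃ ℓ c, IsChain' E A z y ℓ c) {x y : V}
    (h : Related E A x y) : pdist E A x y = dhat E x y :=
  le_antisymm
    ((pdist_le_chainLength (IsChain'.single h)).trans_eq (IsChain'.chainLength_single x y))
    (dhat_le_pdist hE hSep hChain x y)

theorem pdist_eq_zero (hE : ∀ n, Equivalence (E n)) (hSep : ∀ x y : V, x ≠ y → ∃ n, ¬ E n x y)
    (hChain : ∀ x y : V, ∃ z, E 0 x z ∧ ∃ ℓ c, IsChain' E A z y ℓ c) (x y : V) :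
    pdist E A x y = 0 ↔ x = y := by
  refine ⟨fun h => by_contra fun hxy => ?_, fun h => ?_⟩
  · exact ((dhat_pos hSep hxy).trans_le (dhat_le_pdist hE hSep hChain x y)).ne' h
  · subst h; rw [pdist_eq_dhat hE hSep hChain (.inl rfl), dhat_self]

theorem pdist_le_pdist_swap (hE : ∀ n, Equivalence (E n)) (hA : ∀ x y : V, A x y → A y x)
    (hChain : ∀ x y : V, ∃ z, E 0 x z ∧ ∃ ℓ c, IsChain' E A z y ℓ c) (x y : V) :
    pdist E A x y ≤ pdist E A y x :=
  le_pdist hChain fun ℓ c hc =>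
    (pdist_le_chainLength (hc.reverse hE hA)).trans_eq (IsChain'.chainLength_reverse hE ℓ c)

theorem pdist_comm (hE : ∀ n, Equivalence (E n)) (hA : ∀ x y : V, A x y → A y x)
    (hChain : ∀ x y : V, ∃ z, E 0 x z ∧ ∃ ℓ c, IsChain' E A z y ℓ c) (x y : V) :
    pdist E A x y = pdist E A y x :=
  le_antisymm (pdist_le_pdist_swap hE hA hChain x y) (pdist_le_pdist_swap hE hA hChain y x)

open Pointwise in
theorem pdist_triangle (hChain : ∀ x y : V, ∃ z, E 0 x z ∧ ∃ ℓ c, IsChain' E A z y ℓ c)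
    (x y z : V) : pdist E A x z ≤ pdist E A x y + pdist E A y z := by
  rw [pdist_eq_sInf x y, pdist_eq_sInf y z, ← csInf_add (chainLengths_nonempty hChain x y)
    (chainLengths_bddBelow x y) (chainLengths_nonempty hChain y z) (chainLengths_bddBelow y z)]
  refine le_csInf ((chainLengths_nonempty hChain x y).add (chainLengths_nonempty hChain y z)) ?_
  rintro _ ⟨_, ⟨ℓ₁, c₁, h₁, rfl⟩, _, ⟨ℓ₂, c₂, h₂, rfl⟩, rfl⟩
  exact (pdist_le_chainLength (h₁.append h₂)).trans_eq
    (IsChain'.chainLength_append ℓ₂ (h₁.2.1.trans h₂.1.symm))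

end Pdist

theorem pdist_is_metric_general (V : Type*) (E : ℕ → V → V → Prop) (A : V → V → Prop)
    (hEquiv : ∀ n, Equivalence (E n))
    (hSep : ∀ x y : V, x ≠ y → ∃ n : ℕ, ¬ E n x y)
    (hAsymm : ∀ x y : V, A x y → A y x)
    (hChain : ∀ x y : V, ∃ z : V, E 0 x z ∧ ∃ ℓ c, IsChain' E A z y ℓ c) :
    (∀ x y : V, pdist E A x y = 0 ↔ x = y) ∧
    (∀ x y : V, pdist E A x y = pdist E A y x) ∧
    (∀ x y z : V, pdist E A x z ≤ pdist E A x y + pdist E A y z) ∧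
    (∀ x y : V, Related E A x y → pdist E A x y = dhat E x y) :=
  ⟨pdist_eq_zero hEquiv hSep hChain, pdist_comm hEquiv hAsymm hChain, pdist_triangle hChain,
    fun _ _ => pdist_eq_dhat hEquiv hSep hChain⟩

/-- Abstract form of Theorem 5.5 (metric axioms and part (1)): `d` is a metric
on `V` — `d(x,y) = 0 ↔ x = y`, `d` is symmetric, and `d` satisfies the triangle
inequality — and `d(x,y) = d̂(x,y)` whenever `x` and `y` are related. -/
theorem pdist_is_metric (V : Type*) (E : ℕ → V → V → Prop) (A : V → V → Prop)
    (hEquiv : ∀ n, Equivalence (E n))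
    (hRefine : ∀ n x y, E (n + 1) x y → E n x y)
    (hSep : ∀ x y : V, x ≠ y → ∃ n : ℕ, ¬ E n x y)
    (hAsymm : ∀ x y : V, A x y → A y x)
    (hAirrefl : ∀ x : V, ¬ A x x)
    (hChain : ∀ x y : V, ∃ z : V, E 0 x z ∧ ∃ ℓ c, IsChain' E A z y ℓ c) :
    (∀ x y : V, pdist E A x y = 0 ↔ x = y) ∧
    (∀ x y : V, pdist E A x y = pdist E A y x) ∧
    (∀ x y z : V, pdist E A x z ≤ pdist E A x y + pdist E A y z) ∧
    (∀ x y : V, Related E A x y → pdist E A x y = dhat E x y) :=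
  pdist_is_metric_general V E A hEquiv hSep hAsymm hChain
end

section
/- If x, y ∈ V with x ≠ y are not related (that is, ¬ E 0 x y and ¬ A x y), then d(x,y) ≥ 1. (Abstract form of Theorem 5.5, part (2), of the paper.) -/
/-- Abstract form of Theorem 5.5, part (2): if `x ≠ y` are not related
(`¬ E 0 x y` and `¬ A x y`), then `d(x,y) ≥ 1`. -/
theorem pdist_ge_one_of_not_related (V : Type*) (E : ℕ → V → V → Prop)
    (A : V → V → Prop)
    (hEquiv : ∀ n, Equivalence (E n))
    (hRefine : ∀ n x y, E (n + 1) x y → E n x y)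
    (hSep : ∀ x y : V, x ≠ y → ∃ n : ℕ, ¬ E n x y)
    (hAsymm : ∀ x y : V, A x y → A y x)
    (hAirrefl : ∀ x : V, ¬ A x x)
    (hChain : ∀ x y : V, ∃ z : V, E 0 x z ∧ ∃ ℓ c, IsChain' E A z y ℓ c)
    (x y : V) (hxy : x ≠ y) (hE0 : ¬ E 0 x y) (hA : ¬ A x y) :
    1 ≤ pdist E A x y := by
  have hnonneg : ∀ a b : V, 0 ≤ dhat E a b := by
    intro a b
    unfold dhat
    split_ifs <;> positivity
  apply le_csInf
  · -- nonempty: prepend x to a chain from some z with E 0 x z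
    obtain ⟨z, hxz, ℓ, c, hc0, hcl, hcr⟩ := hChain x y
    refine ⟨chainLength E (ℓ + 1) (fun i => if i = 0 then x else c (i - 1)),
      ℓ + 1, _, ⟨rfl, by simp [hcl], ?_⟩, rfl⟩
    intro i hi
    rcases Nat.eq_zero_or_pos i with h0 | hp
    · subst h0
      simp only [if_pos rfl, if_neg one_ne_zero]
      exact Or.inr (Or.inl (by simpa [hc0] using hxz))
    · have h1 : i ≠ 0 := hp.ne'
      have h2 : i + 1 ≠ 0 := by omega
      simp only [if_neg h1, if_neg h2]
      have e : i + 1 - 1 = (i - 1) + 1 := by omega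
      rw [e]
      exact hcr (i - 1) (by omega)
  · rintro L ⟨ℓ, c, ⟨hc0, hcl, hcr⟩, rfl⟩
    by_cases hbad : ∃ i < ℓ, c i ≠ c (i + 1) ∧ ¬ E 0 (c i) (c (i + 1))
    · obtain ⟨i, hi, hne, hnE⟩ := hbad
      have hdi : dhat E (c i) (c (i + 1)) = 1 := by
        unfold dhat; rw [if_neg hne, if_neg hnE]
      calc (1 : ℝ) = dhat E (c i) (c (i + 1)) := hdi.symm
        _ ≤ chainLength E ℓ c :=
          Finset.single_le_sum (fun j _ => hnonneg (c j) (c (j + 1)))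
            (Finset.mem_range.mpr hi)
    · push_neg at hbad
      exfalso
      have key : ∀ i ≤ ℓ, E 0 x (c i) := by
        intro i hi
        induction i with
        | zero => rw [hc0]; exact (hEquiv 0).refl x
        | succ k ih =>
          have hk := ih (by omega)
          rcases eq_or_ne (c k) (c (k + 1)) with h | h
          · rwa [h] at hk
          · exact (hEquiv 0).trans hk (hbad k (by omega) h)
      exact hE0 (by simpa [hcl] using key ℓ le_rfl)
end

section
/- For every n ∈ ℕ and x ∈ V, the class B n x, equipped with the subspace topology inherited from (V, τ), is homeomorphic to the Baire space ℕ → ℕ, i.e. the countably infinite product of a countably infinite discrete space with the product topology. (Abstract form of Corollary 5.9 of the paper.) -/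
/-- Abstract form of Corollary 5.9: under the separation, countable density,
infinite splitting and coherent-limit assumptions, every class `B n x` with the
subspace topology inherited from `(V, τ)` is homeomorphic to the Baire space
`ℕ → ℕ`. -/
theorem class_homeomorphic_baire (V : Type*) [Nonempty V]
    (E : ℕ → V → V → Prop)
    (hEquiv : ∀ n, Equivalence (E n))
    (hRefine : ∀ n x y, E (n + 1) x y → E n x y)
    (hSep : ∀ x y : V, x ≠ y → ∃ n : ℕ, ¬ E n x y)
    (D : Set V) (hDcount : D.Countable)
    (hD : ∀ (n : ℕ) (x : V), (D ∩ {y | E n x y}).Nonempty)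
    (hSplit : ∀ (n : ℕ) (x : V), ∃ T : Set V, T ⊆ {y | E n x y} ∧ T.Infinite ∧
      T.Pairwise fun a b => ¬ E (n + 1) a b)
    (hLim : ∀ y : ℕ → V, (∀ n, E n (y n) (y (n + 1))) → ∃ z : V, ∀ n, E n z (y n)) :
    letI : TopologicalSpace V :=
      TopologicalSpace.generateFrom {s : Set V | ∃ n x, s = {y | E n x y}}
    ∀ (n : ℕ) (x : V),
      Nonempty (({y : V // E n x y}) ≃ₜ (ℕ → ℕ)) := by
  intro n x
  letI : TopologicalSpace V :=
    TopologicalSpace.generateFrom {s : Set V | ∃ n x, s = {y | E n x y}}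
  have Erefl : ∀ m (u : V), E m u u := fun m u => (hEquiv m).refl u
  have Esymm : ∀ m {u v : V}, E m u v → E m v u := fun m => (hEquiv m).symm
  have Etrans : ∀ m {u v w : V}, E m u v → E m v w → E m u w :=
    fun m => (hEquiv m).trans
  have refineLe : ∀ {a b : ℕ}, a ≤ b → ∀ {u v : V}, E b u v → E a u v := by
    intro a b hab
    induction hab with
    | refl => exact fun h => h
    | step _ ih => exact fun h => ih (hRefine _ _ _ h)
  -- For every class `B m z` there is an enumeration of representatives of the
  -- `E (m+1)`-subclasses of it.
  have key : ∀ (m : ℕ) (z : V), ∃ c : ℕ → V, (∀ i, E m z (c i)) ∧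
      (∀ i j, i ≠ j → ¬ E (m + 1) (c i) (c j)) ∧
      (∀ w, E m z w → ∃ i, E (m + 1) w (c i)) := by
    intro m z
    set Q : Set (Set V) := {s | ∃ w, E m z w ∧ s = {v | E (m + 1) w v}} with hQdef
    have classEq : ∀ {w w' : V}, E (m + 1) w w' →
        {v | E (m + 1) w v} = {v | E (m + 1) w' v} := by
      intro w w' h; ext v
      exact ⟨fun hv => Etrans _ (Esymm _ h) hv, fun hv => Etrans _ h hv⟩
    have hQc : Q.Countable := by
      have hsel : ∀ s : Q, ∃ d, d ∈ D ∧ d ∈ (s : Set V) := by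
        rintro ⟨s, w, hw, rfl⟩
        obtain ⟨d, hd⟩ := hD (m + 1) w
        exact ⟨d, hd.1, hd.2⟩
      choose d hd1 hd2 using hsel
      have hinj : Function.Injective d := by
        intro s s' h
        obtain ⟨w, hw, hs⟩ := s.2
        obtain ⟨w', hw', hs'⟩ := s'.2
        apply Subtype.ext
        have h1 : E (m + 1) w (d s) := by
          have := hd2 s; rw [hs] at this; exact this
        have h2 : E (m + 1) w' (d s) := by
          have := hd2 s'; rw [hs'] at this; rw [h]; exact this
        rw [hs, hs']
        exact classEq (Etrans _ h1 (Esymm _ h2))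
      rw [← Set.countable_coe_iff]
      haveI := hDcount.to_subtype
      exact Function.Injective.countable
        (f := fun s : Q => (⟨d s, hd1 s⟩ : D))
        (fun a b h => hinj (congrArg Subtype.val h))
    have hQi : Q.Infinite := by
      obtain ⟨T, hT1, hT2, hT3⟩ := hSplit m z
      refine Set.infinite_of_injOn_mapsTo (f := fun w => {v | E (m + 1) w v})
        ?_ ?_ hT2
      · intro a ha b hb hab
        by_contra hne
        have hab' : {v | E (m + 1) a v} = {v | E (m + 1) b v} := hab
        have : a ∈ {v | E (m + 1) b v} := by
          rw [← hab']; exact Erefl (m + 1) a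
        exact hT3 hb ha (fun h => hne h.symm) this
      · intro a ha
        exact ⟨a, hT1 ha, rfl⟩
    haveI := hQc.to_subtype
    haveI := hQi.to_subtype
    obtain ⟨e⟩ : Nonempty (ℕ ≃ Q) := nonempty_equiv_of_countable
    have hq : ∀ s : Q, ∃ w, E m z w ∧ (s : Set V) = {v | E (m + 1) w v} :=
      fun s => s.2
    choose wq hw1 hw2 using hq
    refine ⟨fun i => wq (e i), fun i => hw1 _, ?_, ?_⟩
    · intro i j hij hE
      apply hij
      apply e.injective
      apply Subtype.ext
      rw [hw2 (e i), hw2 (e j)]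
      exact classEq hE
    · intro w hw
      set s : Q := ⟨{v | E (m + 1) w v}, ⟨w, hw, rfl⟩⟩ with hs
      refine ⟨e.symm s, ?_⟩
      have h2 := hw2 (e (e.symm s))
      rw [e.apply_symm_apply] at h2
      have hmem : w ∈ (s : Set V) := show E (m + 1) w w from Erefl _ _
      rw [h2] at hmem
      show E (m + 1) w (wq (e (e.symm s)))
      rw [e.apply_symm_apply]
      exact Esymm _ hmem
  choose c hc1 hc2 hc3 using key
  -- The tree of representatives: `G t` is the representative of the node
  -- reached from `x` by following the (reversed) list `t`.
  let G : List ℕ → V := fun l =>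
    List.rec (motive := fun _ => V) x (fun i t ih => c (n + t.length) ih i) l
  have Gnil : G [] = x := rfl
  have Gcons : ∀ (i : ℕ) (t : List ℕ), G (i :: t) = c (n + t.length) (G t) i :=
    fun _ _ => rfl
  have gstep : ∀ (t : List ℕ) (i : ℕ), E (n + t.length) (G t) (G (i :: t)) := by
    intro t i; rw [Gcons]; exact hc1 _ _ _
  -- initial segments of a Baire-space point, as reversed lists
  let seg : (ℕ → ℕ) → ℕ → List ℕ := fun σ k =>
    Nat.rec [] (fun k ih => σ k :: ih) k
  have seg_zero : ∀ σ, seg σ 0 = [] := fun _ => rfl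
  have seg_succ : ∀ σ k, seg σ (k + 1) = σ k :: seg σ k := fun _ _ => rfl
  have seg_len : ∀ σ k, (seg σ k).length = k := by
    intro σ k
    induction k with
    | zero => rfl
    | succ k ih => rw [seg_succ]; simp [ih]
  have seg_congr : ∀ (k : ℕ) (σ σ' : ℕ → ℕ), (∀ j < k, σ j = σ' j) →
      seg σ k = seg σ' k := by
    intro k σ σ' h
    induction k with
    | zero => rfl
    | succ k ih =>
      rw [seg_succ, seg_succ, h k (lt_add_one k),
        ih (fun j hj => h j (hj.trans (lt_add_one k)))]
  have gseg : ∀ σ k, G (seg σ (k + 1)) = c (n + k) (G (seg σ k)) (σ k) := by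
    intro σ k; rw [seg_succ, Gcons, seg_len]
  have gsegE : ∀ σ k, E (n + k) (G (seg σ k)) (G (seg σ (k + 1))) := by
    intro σ k
    have h := gstep (seg σ k) (σ k)
    rw [seg_len] at h
    rw [seg_succ]; exact h
  -- coherent limits along branches
  have hPsi : ∀ σ : ℕ → ℕ, ∃ z : V, ∀ k, E (n + k) z (G (seg σ k)) := by
    intro σ
    have hchain : ∀ j, E j (G (seg σ (j - n))) (G (seg σ (j + 1 - n))) := by
      intro j
      rcases Nat.lt_or_ge j n with h | h
      · have h1 : j - n = 0 := Nat.sub_eq_zero_of_le h.le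
        have h2 : j + 1 - n = 0 := Nat.sub_eq_zero_of_le h
        rw [h1, h2]
        exact Erefl _ _
      · obtain ⟨k, rfl⟩ := Nat.exists_eq_add_of_le h
        have h1 : n + k - n = k := by omega
        have h2 : n + k + 1 - n = k + 1 := by omega
        rw [h1, h2]
        exact gsegE σ k
    obtain ⟨z, hz⟩ := hLim (fun j => G (seg σ (j - n))) hchain
    refine ⟨z, fun k => ?_⟩
    have := hz (n + k)
    simpa [Nat.add_sub_cancel_left] using this
  choose Ψ hΨ using hPsi
  have hΨx : ∀ σ, E n x (Ψ σ) := by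
    intro σ
    have h := hΨ σ 0
    rw [seg_zero, Gnil] at h
    simpa using (Esymm _ h)
  -- uniqueness of itineraries
  have uniq : ∀ (y : V) (t t' : List ℕ), t.length = t'.length →
      E (n + t.length) (G t) y → E (n + t'.length) (G t') y → t = t' := by
    intro y t
    induction t with
    | nil =>
      intro t' hl _ _
      symm
      exact List.length_eq_zero_iff.mp hl.symm
    | cons i t ih =>
      intro t' hl h1 h2
      cases t' with
      | nil => simp at hl
      | cons i' t₁ =>
        simp only [List.length_cons, Nat.add_right_cancel_iff] at hl
        have ht : E (n + t.length) (G t) y :=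
          Etrans _ (gstep t i) (refineLe (Nat.le_succ _) h1)
        have ht' : E (n + t₁.length) (G t₁) y :=
          Etrans _ (gstep t₁ i') (refineLe (Nat.le_succ _) h2)
        have heq : t = t₁ := ih t₁ hl ht ht'
        subst heq
        have hci : E (n + t.length + 1) (c (n + t.length) (G t) i) y := by
          rw [← Gcons]; exact h1
        have hci' : E (n + t.length + 1) (c (n + t.length) (G t) i') y := by
          rw [← Gcons]; exact h2
        by_contra hne
        have hii : i ≠ i' := fun h => hne (by rw [h])
        exact hc2 (n + t.length) (G t) i i' hii (Etrans _ hci (Esymm _ hci'))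
  have uniq' : ∀ (y : V) (k : ℕ) (t t' : List ℕ), t.length = k → t'.length = k →
      E (n + k) (G t) y → E (n + k) (G t') y → t = t' := by
    intro y k t t' h1 h2 hE1 hE2
    exact uniq y t t' (h1.trans h2.symm) (by rw [h1]; exact hE1)
      (by rw [h2]; exact hE2)
  let Ψ' : (ℕ → ℕ) → {y : V // E n x y} := fun σ => ⟨Ψ σ, hΨx σ⟩
  have hinj : Function.Injective Ψ' := by
    intro σ σ' h
    by_contra hne
    have hex : ∃ k, σ k ≠ σ' k := Function.ne_iff.mp hne
    have hk : σ (Nat.find hex) ≠ σ' (Nat.find hex) := Nat.find_spec hex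
    have hkmin : ∀ j < Nat.find hex, σ j = σ' j :=
      fun j hj => not_not.mp (Nat.find_min hex hj)
    set k := Nat.find hex
    have hseg : seg σ k = seg σ' k := seg_congr k σ σ' hkmin
    have h1 := hΨ σ (k + 1)
    have h2 := hΨ σ' (k + 1)
    rw [gseg] at h1 h2
    have hval : Ψ σ = Ψ σ' := congrArg Subtype.val h
    rw [hval, hseg] at h1
    exact hc2 (n + k) (G (seg σ' k)) (σ k) (σ' k) hk (Etrans _ (Esymm _ h1) h2)
  have hsurj : Function.Surjective Ψ' := by
    rintro ⟨y, hy⟩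
    have hstep : ∀ t : List ℕ, E (n + t.length) (G t) y →
        ∃ i, E (n + t.length + 1) (G (i :: t)) y := by
      intro t ht
      obtain ⟨i, hi⟩ := hc3 (n + t.length) (G t) y ht
      refine ⟨i, ?_⟩
      rw [Gcons]
      exact Esymm _ hi
    choose idx hidx using hstep
    let F : ∀ k : ℕ, {t : List ℕ // t.length = k ∧ E (n + t.length) (G t) y} :=
      fun k => Nat.rec ⟨[], rfl, hy⟩
        (fun _ p => ⟨idx p.1 p.2.2 :: p.1, by simp [p.2.1], hidx p.1 p.2.2⟩) k
    let σ : ℕ → ℕ := fun k => idx (F k).1 (F k).2.2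
    have hFseg : ∀ k, seg σ k = (F k).1 := by
      intro k
      induction k with
      | zero => rfl
      | succ k ih =>
        rw [seg_succ, ih]
    have hzy : ∀ k, E (n + k) (Ψ σ) y := by
      intro k
      have h1 := hΨ σ k
      rw [hFseg] at h1
      have h2 := (F k).2.2
      rw [(F k).2.1] at h2
      exact Etrans _ h1 h2
    have hΨy : Ψ σ = y := by
      by_contra hne
      obtain ⟨n₀, hn₀⟩ := hSep _ _ hne
      exact hn₀ (refineLe (Nat.le_add_left n₀ n) (hzy n₀))
    exact ⟨σ, Subtype.ext hΨy⟩
  let Eqv : (ℕ → ℕ) ≃ {y : V // E n x y} := Equiv.ofBijective Ψ' ⟨hinj, hsurj⟩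
  -- generators are open
  have hopenGen : ∀ (m : ℕ) (z : V), IsOpen {v : V | E m z v} := fun m z =>
    TopologicalSpace.isOpen_generateFrom_of_mem ⟨m, z, rfl⟩
  -- continuity of `Ψ` into `V`
  have contΨV : Continuous (fun σ : ℕ → ℕ => Ψ σ) := by
    refine continuous_generateFrom_iff.mpr ?_
    rintro s ⟨m, z, rfl⟩
    rcases Nat.lt_or_ge m n with hm | hm
    · have hiff : ∀ σ : ℕ → ℕ, E m z (Ψ σ) ↔ E m z x := by
        intro σ
        have hx : E m x (Ψ σ) := refineLe hm.le (hΨx σ)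
        exact ⟨fun h => Etrans _ h (Esymm _ hx), fun h => Etrans _ h hx⟩
      by_cases hzx : E m z x
      · have hpre : (fun σ : ℕ → ℕ => Ψ σ) ⁻¹' {y | E m z y} = Set.univ := by
          ext σ; simp [hiff σ, hzx]
        rw [hpre]; exact isOpen_univ
      · have hpre : (fun σ : ℕ → ℕ => Ψ σ) ⁻¹' {y | E m z y} = ∅ := by
          ext σ; simp [hiff σ, hzx]
        rw [hpre]; exact isOpen_empty
    · obtain ⟨k, rfl⟩ := Nat.exists_eq_add_of_le hm
      have hiff : ∀ σ : ℕ → ℕ, E (n + k) z (Ψ σ) ↔ E (n + k) z (G (seg σ k)) := by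
        intro σ
        have h1 := hΨ σ k
        exact ⟨fun h => Etrans _ h h1, fun h => Etrans _ h (Esymm _ h1)⟩
      have hpre : (fun σ : ℕ → ℕ => Ψ σ) ⁻¹' {y | E (n + k) z y} =
          (fun (σ : ℕ → ℕ) (j : Fin k) => σ j) ⁻¹'
            {f : Fin k → ℕ |
              E (n + k) z (G (seg (fun j => if h : j < k then f ⟨j, h⟩ else 0) k))} := by
        ext σ
        simp only [Set.mem_preimage, Set.mem_setOf_eq]
        rw [hiff σ]
        have hcongr :
            seg (fun j => if h : j < k then σ j else 0) k = seg σ k := by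
          apply seg_congr
          intro j hj
          simp [hj]
        constructor
        · intro h
          rw [show (fun j => if h : j < k then
              (fun (j : Fin k) => σ (j : ℕ)) ⟨j, h⟩ else 0) =
              (fun j => if h : j < k then σ j else 0) from rfl, hcongr]
          exact h
        · intro h
          rw [show (fun j => if h : j < k then
              (fun (j : Fin k) => σ (j : ℕ)) ⟨j, h⟩ else 0) =
              (fun j => if h : j < k then σ j else 0) from rfl, hcongr] at h
          exact h
      rw [hpre]
      have contr : Continuous (fun (σ : ℕ → ℕ) (j : Fin k) => σ (j : ℕ)) := by
        apply continuous_pi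
        intro j
        exact continuous_apply (j : ℕ)
      exact IsOpen.preimage contr (isOpen_discrete _)
  -- continuity of the inverse
  have contInv : Continuous (fun y : {y : V // E n x y} => (Eqv.symm y : ℕ → ℕ)) := by
    refine continuous_pi fun k => ?_
    rw [continuous_discrete_rng]
    intro i
    have hfib : (fun y : {y : V // E n x y} => Eqv.symm y k) ⁻¹' {i} =
        ⋃ (t : {l : List ℕ // l.length = k}),
          {y : {y : V // E n x y} | E (n + k + 1) (G (i :: t.1)) y.1} := by
      ext y
      simp only [Set.mem_preimage, Set.mem_singleton_iff, Set.mem_iUnion,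
        Set.mem_setOf_eq]
      have hy : Ψ (Eqv.symm y) = y.1 :=
        congrArg Subtype.val (Eqv.apply_symm_apply y)
      constructor
      · intro h
        subst h
        refine ⟨⟨seg (Eqv.symm y) k, seg_len _ k⟩, ?_⟩
        have h1 := hΨ (Eqv.symm y) (k + 1)
        rw [hy] at h1
        rw [show (Eqv.symm y k) :: seg (Eqv.symm y) k = seg (Eqv.symm y) (k + 1)
          from (seg_succ _ k).symm]
        exact Esymm _ h1
      · rintro ⟨⟨t, ht⟩, hE⟩
        have h1 := hΨ (Eqv.symm y) (k + 1)
        rw [hy] at h1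
        have hcons : i :: t = seg (Eqv.symm y) (k + 1) :=
          uniq' y.1 (k + 1) (i :: t) (seg (Eqv.symm y) (k + 1))
            (by simp [ht]) (seg_len (Eqv.symm y) (k + 1)) hE (Esymm _ h1)
        rw [seg_succ] at hcons
        injection hcons with hih _
        exact hih.symm
    rw [hfib]
    apply isOpen_iUnion
    intro t
    exact (hopenGen (n + k + 1) (G (i :: t.1))).preimage continuous_subtype_val
  exact ⟨{ toEquiv := Eqv.symm, continuous_toFun := contInv,
           continuous_invFun := Continuous.subtype_mk contΨV hΨx }⟩
end
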